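/- Variational expression for the two-parameter Rényi mutual information: for all α, β ∈ (0,∞), (1−α) · Ĩ_{α,β}(X:Y)_{P_XY} = min over probability distributions Q_XY on 𝒳×𝒴 that are absolutely continuous with respect to P_XY of ( (α(1−β)/β) · D(Q_Y‖P_Y) + α · D(Q_XY‖P_XY) + (1−α) · D(Q_{X|Y}‖P_X | Q_Y) ), where Q_Y is the marginal of Q_XY on 𝒴, Q_{X|Y}(x|y) = Q_XY(x,y)/Q_Y(y) for Q_Y(y) > 0, and D(Q_{X|Y}‖P_X | Q_Y) := Σ_{y: Q_Y(y)>0} Q_Y(y) · D(Q_{X|Y}(·|y)‖P_X). -/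
import Mathlib


open scoped BigOperators

noncomputable section

variable {𝓧 𝓨 : Type*} [Fintype 𝓧] [Fintype 𝓨]

/-- Marginal distribution of the first component. -/
def pX (P : 𝓧 × 𝓨 → ℝ) (x : 𝓧) : ℝ := ∑ y, P (x, y)

/-- Marginal distribution of the second component. -/
def pY (P : 𝓧 × 𝓨 → ℝ) (y : 𝓨) : ℝ := ∑ x, P (x, y)

/-- Conditional distribution `P_{X|Y}(x|y)`. -/
def pCond (P : 𝓧 × 𝓨 → ℝ) (x : 𝓧) (y : 𝓨) : ℝ := P (x, y) / pY P y

/-- Two-parameter Rényi mutual information `Ĩ_{α,β}(X:Y)` for `α ≠ 1`. -/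
def Itilde (P : 𝓧 × 𝓨 → ℝ) (α β : ℝ) : ℝ :=
  α / (β * (α - 1)) *
    Real.logb 2 (∑ y, if 0 < pY P y then
      pY P y *
        (∑ x, if 0 < pX P x then pX P x ^ (1 - α) * pCond P x y ^ α else 0) ^ (β / α)
      else 0)

/-- Shannon mutual information `I(X:Y)`. -/
def shannonMI (P : 𝓧 × 𝓨 → ℝ) : ℝ :=
  ∑ p, if 0 < P p then P p * Real.logb 2 (pCond P p.1 p.2 / pX P p.1) else 0

/-- Two-parameter Rényi mutual information, continuously extended at `α = 1`. -/
def ItildeE (P : 𝓧 × 𝓨 → ℝ) (α β : ℝ) : ℝ :=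
  if α = 1 then shannonMI P else Itilde P α β

/-- Relative entropy `D(Q‖P)` (for `Q` absolutely continuous w.r.t. `P`). -/
def relEnt {𝓩 : Type*} [Fintype 𝓩] (Q P : 𝓩 → ℝ) : ℝ :=
  ∑ z, if 0 < Q z then Q z * Real.logb 2 (Q z / P z) else 0

/-! ### Auxiliary definitions -/

/-- `g(x,y) = P_X(x)^{1-α} P_{X|Y}(x|y)^α` (guarded). -/
def gfun (P : 𝓧 × 𝓨 → ℝ) (α : ℝ) (x : 𝓧) (y : 𝓨) : ℝ :=
  if 0 < pX P x then pX P x ^ (1 - α) * pCond P x y ^ α else 0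

def Afun (P : 𝓧 × 𝓨 → ℝ) (α : ℝ) (y : 𝓨) : ℝ := ∑ x, gfun P α x y

def Zfun (P : 𝓧 × 𝓨 → ℝ) (α β : ℝ) : ℝ :=
  ∑ y, if 0 < pY P y then pY P y * Afun P α y ^ (β / α) else 0

def Mfun (P : 𝓧 × 𝓨 → ℝ) (α β : ℝ) (y : 𝓨) : ℝ :=
  if 0 < pY P y then pY P y * Afun P α y ^ (β / α) / Zfun P α β else 0

def Qstar (P : 𝓧 × 𝓨 → ℝ) (α β : ℝ) (p : 𝓧 × 𝓨) : ℝ :=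
  Mfun P α β p.2 * gfun P α p.1 p.2 / Afun P α p.2

/-! ### Basic inequalities -/

lemma aux_log_ge_sub (q p : ℝ) (hq : 0 < q) (hp : 0 < p) :
    q - p ≤ q * Real.log (q / p) := by
  have h1 : Real.log p - Real.log q ≤ p / q - 1 := by
    rw [← Real.log_div hp.ne' hq.ne']
    exact Real.log_le_sub_one_of_pos (by positivity)
  have h2 : p / q * q = p := div_mul_cancel₀ _ hq.ne'
  rw [Real.log_div hq.ne' hp.ne']
  nlinarith

lemma aux_gibbs {ι : Type*} [Fintype ι] (q p : ι → ℝ) (hq : ∀ i, 0 ≤ q i)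
    (hp : ∀ i, 0 ≤ p i) (hsq : ∑ i, q i = 1) (hsp : ∑ i, p i ≤ 1)
    (hac : ∀ i, 0 < q i → 0 < p i) :
    0 ≤ ∑ i, if 0 < q i then q i * Real.log (q i / p i) else 0 := by
  have key : ∀ i ∈ Finset.univ, (if 0 < q i then q i - p i else 0) ≤
      (if 0 < q i then q i * Real.log (q i / p i) else 0) := by
    intro i _
    split_ifs with h
    · exact aux_log_ge_sub _ _ h (hac i h)
    · exact le_refl 0
  have e1 : ∑ i, (if 0 < q i then q i - p i else 0)
      = (∑ i, if 0 < q i then q i else 0) - ∑ i, (if 0 < q i then p i else 0) := by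
    rw [← Finset.sum_sub_distrib]
    apply Finset.sum_congr rfl
    intro i _
    split_ifs <;> simp
  have e2 : (∑ i, if 0 < q i then q i else 0) = 1 := by
    rw [← hsq]
    apply Finset.sum_congr rfl
    intro i _
    split_ifs with h
    · rfl
    · exact (le_antisymm (not_lt.mp h) (hq i)).symm
  have e3 : (∑ i, if 0 < q i then p i else 0) ≤ 1 := by
    refine le_trans (Finset.sum_le_sum (fun i _ => ?_)) hsp
    split_ifs
    · exact le_refl _
    · exact hp i
  have h0 : 0 ≤ ∑ i, (if 0 < q i then q i - p i else 0) := by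
    rw [e1, e2]; linarith
  exact le_trans h0 (Finset.sum_le_sum key)

/-! ### Marginalization lemmas -/

lemma pY_nonneg (Q : 𝓧 × 𝓨 → ℝ) (hQ0 : ∀ p, 0 ≤ Q p) (y : 𝓨) : 0 ≤ pY Q y :=
  Finset.sum_nonneg fun _ _ => hQ0 _

lemma pX_nonneg (Q : 𝓧 × 𝓨 → ℝ) (hQ0 : ∀ p, 0 ≤ Q p) (x : 𝓧) : 0 ≤ pX Q x :=
  Finset.sum_nonneg fun _ _ => hQ0 _

lemma aux_exists_pos (Q : 𝓧 × 𝓨 → ℝ) (hQ0 : ∀ p, 0 ≤ Q p) (y : 𝓨)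
    (hy : 0 < pY Q y) : ∃ x, 0 < Q (x, y) := by
  by_contra h
  push_neg at h
  exact absurd hy (not_lt.mpr (Finset.sum_nonpos fun x _ => h x))

lemma aux_zero_of_pY_zero (Q : 𝓧 × 𝓨 → ℝ) (hQ0 : ∀ p, 0 ≤ Q p) (y : 𝓨)
    (hy : ¬ 0 < pY Q y) (x : 𝓧) : Q (x, y) = 0 := by
  by_contra h
  have hx : 0 < Q (x, y) := lt_of_le_of_ne (hQ0 _) (Ne.symm h)
  exact hy (lt_of_lt_of_le hx (Finset.single_le_sum (f := fun x' => Q (x', y))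
    (fun i _ => hQ0 _) (Finset.mem_univ x)))

lemma aux_sum_pY (Q : 𝓧 × 𝓨 → ℝ) : ∑ y, pY Q y = ∑ p, Q p := by
  simp only [pY]
  rw [Fintype.sum_prod_type]
  exact Finset.sum_comm

lemma aux_marg_y (Q : 𝓧 × 𝓨 → ℝ) (hQ0 : ∀ p, 0 ≤ Q p) (h : 𝓨 → ℝ) :
    ∑ y, (if 0 < pY Q y then pY Q y * h y else 0)
      = ∑ p : 𝓧 × 𝓨, (if 0 < Q p then Q p * h p.2 else 0) := by
  rw [Fintype.sum_prod_type, Finset.sum_comm]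
  apply Finset.sum_congr rfl
  intro y _
  by_cases hy : 0 < pY Q y
  · rw [if_pos hy]
    have step : ∀ x : 𝓧, (if 0 < Q (x, y) then Q (x, y) * h y else 0) = Q (x, y) * h y := by
      intro x
      split_ifs with hx
      · rfl
      · rw [le_antisymm (not_lt.mp hx) (hQ0 _), zero_mul]
    calc pY Q y * h y = (∑ x, Q (x, y)) * h y := rfl
      _ = ∑ x, Q (x, y) * h y := Finset.sum_mul _ _ _
      _ = ∑ x, (if 0 < Q (x, y) then Q (x, y) * h y else 0) := by
          exact (Finset.sum_congr rfl fun x _ => step x).symm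
  · rw [if_neg hy]
    have := aux_zero_of_pY_zero Q hQ0 y hy
    symm
    apply Finset.sum_eq_zero
    intro x _
    simp [this x]

lemma aux_cond_joint (Q : 𝓧 × 𝓨 → ℝ) (hQ0 : ∀ p, 0 ≤ Q p) (F : 𝓧 → 𝓨 → ℝ) :
    ∑ y, (if 0 < pY Q y then
        pY Q y * ∑ x, (if 0 < pCond Q x y then pCond Q x y * F x y else 0) else 0)
      = ∑ p : 𝓧 × 𝓨, (if 0 < Q p then Q p * F p.1 p.2 else 0) := by
  rw [Fintype.sum_prod_type, Finset.sum_comm]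
  apply Finset.sum_congr rfl
  intro y _
  by_cases hy : 0 < pY Q y
  · rw [if_pos hy, Finset.mul_sum]
    apply Finset.sum_congr rfl
    intro x _
    by_cases hx : 0 < Q (x, y)
    · have hc : 0 < pCond Q x y := div_pos hx hy
      rw [if_pos hc, if_pos hx]
      show pY Q y * (Q (x, y) / pY Q y * F x y) = Q (x, y) * F x y
      field_simp
    · have hq0 : Q (x, y) = 0 := le_antisymm (not_lt.mp hx) (hQ0 _)
      have hc : ¬ 0 < pCond Q x y := by
        show ¬ 0 < Q (x, y) / pY Q y
        rw [hq0, zero_div]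
        exact lt_irrefl 0
      rw [if_neg hc, if_neg hx, mul_zero]
  · rw [if_neg hy]
    have := aux_zero_of_pY_zero Q hQ0 y hy
    symm
    apply Finset.sum_eq_zero
    intro x _
    simp [this x]

lemma aux_sum_if_mul_const {ι : Type*} [Fintype ι] (q : ι → ℝ) (c : ℝ) :
    ∑ i, (if 0 < q i then q i * c else 0) = (∑ i, if 0 < q i then q i else 0) * c := by
  rw [Finset.sum_mul]
  apply Finset.sum_congr rfl
  intro i _
  split_ifs <;> simp

/-! ### Positivity facts -/

section Pos

variable (P : 𝓧 × 𝓨 → ℝ) (hP : ∀ p, 0 ≤ P p) (α β : ℝ)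

include hP

lemma pCond_nonneg (x : 𝓧) (y : 𝓨) : 0 ≤ pCond P x y :=
  div_nonneg (hP _) (pY_nonneg P hP y)

lemma gfun_nonneg (x : 𝓧) (y : 𝓨) : 0 ≤ gfun P α x y := by
  unfold gfun
  split_ifs
  · exact mul_nonneg (Real.rpow_nonneg (pX_nonneg P hP x) _)
      (Real.rpow_nonneg (pCond_nonneg P hP x y) _)
  · exact le_refl 0

lemma Afun_nonneg (y : 𝓨) : 0 ≤ Afun P α y :=
  Finset.sum_nonneg fun x _ => gfun_nonneg P hP α x y

lemma gfun_pos {x : 𝓧} {y : 𝓨} (hp : 0 < P (x, y)) : 0 < gfun P α x y := by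
  have hx : 0 < pX P x := lt_of_lt_of_le hp
    (Finset.single_le_sum (f := fun y' => P (x, y')) (fun i _ => hP _) (Finset.mem_univ y))
  have hy : 0 < pY P y := lt_of_lt_of_le hp
    (Finset.single_le_sum (f := fun x' => P (x', y)) (fun i _ => hP _) (Finset.mem_univ x))
  have hc : 0 < pCond P x y := div_pos hp hy
  unfold gfun
  rw [if_pos hx]
  exact mul_pos (Real.rpow_pos_of_pos hx _) (Real.rpow_pos_of_pos hc _)

lemma Afun_pos {y : 𝓨} (hy : 0 < pY P y) : 0 < Afun P α y := by
  obtain ⟨x, hx⟩ := aux_exists_pos P hP y hy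
  exact Finset.sum_pos' (fun i _ => gfun_nonneg P hP α i y)
    ⟨x, Finset.mem_univ x, gfun_pos P hP α hx⟩

lemma Zfun_nonneg : 0 ≤ Zfun P α β := by
  apply Finset.sum_nonneg
  intro y _
  split_ifs with hy
  · exact mul_nonneg hy.le (Real.rpow_nonneg (Afun_nonneg P hP α y) _)
  · exact le_refl 0

lemma Zfun_pos (hPsum : ∑ p, P p = 1) : 0 < Zfun P α β := by
  have hsum : ∑ y, pY P y = 1 := by rw [aux_sum_pY]; exact hPsum
  have : ∃ y, 0 < pY P y := by
    by_contra h
    push_neg at h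
    have : ∑ y, pY P y ≤ 0 := Finset.sum_nonpos fun y _ => h y
    linarith
  obtain ⟨y, hy⟩ := this
  refine Finset.sum_pos' (fun i _ => ?_) ⟨y, Finset.mem_univ y, ?_⟩
  · split_ifs with h
    · exact mul_nonneg h.le (Real.rpow_nonneg (Afun_nonneg P hP α i) _)
    · exact le_refl 0
  · rw [if_pos hy]
    exact mul_pos hy (Real.rpow_pos_of_pos (Afun_pos P hP α hy) _)

lemma Mfun_nonneg (hZ : 0 < Zfun P α β) (y : 𝓨) : 0 ≤ Mfun P α β y := by
  unfold Mfun
  split_ifs with hy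
  · exact div_nonneg (mul_nonneg hy.le (Real.rpow_nonneg (Afun_nonneg P hP α y) _)) hZ.le
  · exact le_refl 0

lemma Mfun_pos (hZ : 0 < Zfun P α β) {y : 𝓨} (hy : 0 < pY P y) : 0 < Mfun P α β y := by
  unfold Mfun
  rw [if_pos hy]
  exact div_pos (mul_pos hy (Real.rpow_pos_of_pos (Afun_pos P hP α hy) _)) hZ

lemma Mfun_sum (hZ : 0 < Zfun P α β) : ∑ y, Mfun P α β y = 1 := by
  unfold Mfun
  have : ∀ y : 𝓨, (if 0 < pY P y then pY P y * Afun P α y ^ (β / α) / Zfun P α β else 0)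
      = (if 0 < pY P y then pY P y * Afun P α y ^ (β / α) else 0) / Zfun P α β := by
    intro y; split_ifs <;> simp
  rw [Finset.sum_congr rfl fun y _ => this y, ← Finset.sum_div]
  exact div_self hZ.ne'

lemma Afun_sum_div {y : 𝓨} (hA : 0 < Afun P α y) :
    ∑ x, gfun P α x y / Afun P α y = 1 := by
  rw [← Finset.sum_div]
  exact div_self hA.ne'

end Pos

/-! ### The pointwise log identity -/

lemma aux_pointwise (P : 𝓧 × 𝓨 → ℝ) (hP : ∀ p, 0 ≤ P p) (α β : ℝ)
    (hα : 0 < α) (hβ : 0 < β) (hZ : 0 < Zfun P α β)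
    (Q : 𝓧 × 𝓨 → ℝ) (hQ0 : ∀ p, 0 ≤ Q p) (hQP : ∀ p, P p = 0 → Q p = 0)
    (x : 𝓧) (y : 𝓨) (hp : 0 < Q (x, y)) :
    α * (1 - β) / β * Real.log (pY Q y / pY P y) + α * Real.log (Q (x, y) / P (x, y))
      + (1 - α) * Real.log (pCond Q x y / pX P x)
    = Real.log (pCond Q x y / (gfun P α x y / Afun P α y))
      + α / β * Real.log (pY Q y / Mfun P α β y)
      - α / β * Real.log (Zfun P α β) := by
  have hPp : 0 < P (x, y) := by
    rcases (hP (x, y)).lt_or_eq with h | h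
    · exact h
    · exact absurd (hQP _ h.symm) hp.ne'
  have hpYP : 0 < pY P y := lt_of_lt_of_le hPp
    (Finset.single_le_sum (f := fun x' => P (x', y)) (fun i _ => hP _) (Finset.mem_univ x))
  have hpX : 0 < pX P x := lt_of_lt_of_le hPp
    (Finset.single_le_sum (f := fun y' => P (x, y')) (fun i _ => hP _) (Finset.mem_univ y))
  have hpYQ : 0 < pY Q y := lt_of_lt_of_le hp
    (Finset.single_le_sum (f := fun x' => Q (x', y)) (fun i _ => hQ0 _) (Finset.mem_univ x))
  have hcQ : 0 < pCond Q x y := div_pos hp hpYQ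
  have hcP : 0 < pCond P x y := div_pos hPp hpYP
  have hA : 0 < Afun P α y := Afun_pos P hP α hpYP
  have hg : gfun P α x y = pX P x ^ (1 - α) * pCond P x y ^ α := if_pos hpX
  have hgpos : 0 < gfun P α x y := gfun_pos P hP α hPp
  have hM : Mfun P α β y = pY P y * Afun P α y ^ (β / α) / Zfun P α β := if_pos hpYP
  have hMpos : 0 < Mfun P α β y := Mfun_pos P hP α β hZ hpYP
  have hQfac : Q (x, y) = pCond Q x y * pY Q y := (div_mul_cancel₀ _ hpYQ.ne').symm
  have hPfac : P (x, y) = pCond P x y * pY P y := (div_mul_cancel₀ _ hpYP.ne').symm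
  have e1 : Real.log (pY Q y / pY P y) = Real.log (pY Q y) - Real.log (pY P y) :=
    Real.log_div hpYQ.ne' hpYP.ne'
  have e2 : Real.log (Q (x, y) / P (x, y))
      = Real.log (pCond Q x y) + Real.log (pY Q y)
        - (Real.log (pCond P x y) + Real.log (pY P y)) := by
    rw [hQfac, hPfac, Real.log_div (by positivity) (by positivity),
      Real.log_mul hcQ.ne' hpYQ.ne', Real.log_mul hcP.ne' hpYP.ne']
  have e3 : Real.log (pCond Q x y / pX P x) = Real.log (pCond Q x y) - Real.log (pX P x) :=
    Real.log_div hcQ.ne' hpX.ne'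
  have e4 : Real.log (pCond Q x y / (gfun P α x y / Afun P α y))
      = Real.log (pCond Q x y)
        - ((1 - α) * Real.log (pX P x) + α * Real.log (pCond P x y)
           - Real.log (Afun P α y)) := by
    rw [Real.log_div hcQ.ne' (by positivity), Real.log_div hgpos.ne' hA.ne', hg,
      Real.log_mul (Real.rpow_pos_of_pos hpX _).ne' (Real.rpow_pos_of_pos hcP _).ne',
      Real.log_rpow hpX, Real.log_rpow hcP]
  have e5 : Real.log (pY Q y / Mfun P α β y)
      = Real.log (pY Q y)
        - (Real.log (pY P y) + β / α * Real.log (Afun P α y) - Real.log (Zfun P α β)) := by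
    rw [Real.log_div hpYQ.ne' hMpos.ne', hM, Real.log_div (by positivity) hZ.ne',
      Real.log_mul hpYP.ne' (Real.rpow_pos_of_pos hA _).ne', Real.log_rpow hA]
  rw [e1, e2, e3, e4, e5]
  field_simp
  ring

/-! ### The rearrangement identity -/

lemma relEnt_mul_log2 {ι : Type*} [Fintype ι] (q r : ι → ℝ) :
    relEnt q r * Real.log 2 = ∑ i, (if 0 < q i then q i * Real.log (q i / r i) else 0) := by
  have hlog2 : (0:ℝ) < Real.log 2 := Real.log_pos (by norm_num)
  rw [relEnt, Finset.sum_mul]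
  apply Finset.sum_congr rfl
  intro i _
  split_ifs
  · rw [Real.logb]
    field_simp
  · exact zero_mul _

lemma aux_rearrange (P : 𝓧 × 𝓨 → ℝ) (hP : ∀ p, 0 ≤ P p) (α β : ℝ)
    (hα : 0 < α) (hβ : 0 < β) (hZ : 0 < Zfun P α β)
    (Q : 𝓧 × 𝓨 → ℝ) (hQ0 : ∀ p, 0 ≤ Q p) (hQsum : ∑ p, Q p = 1)
    (hQP : ∀ p, P p = 0 → Q p = 0) :
    (α * (1 - β) / β * relEnt (pY Q) (pY P) + α * relEnt Q P +
        (1 - α) * (∑ y, if 0 < pY Q y then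
          pY Q y * relEnt (fun x => pCond Q x y) (pX P) else 0)) * Real.log 2
    = (∑ p : 𝓧 × 𝓨, if 0 < Q p then
          Q p * Real.log (pCond Q p.1 p.2 / (gfun P α p.1 p.2 / Afun P α p.2)) else 0)
      + α / β * (∑ y, if 0 < pY Q y then pY Q y * Real.log (pY Q y / Mfun P α β y) else 0)
      - α / β * Real.log (Zfun P α β) := by
  have hlog2 : (0:ℝ) < Real.log 2 := Real.log_pos (by norm_num)
  have hL : ∀ (a r : ℝ), a * Real.logb 2 r * Real.log 2 = a * Real.log r := by
    intro a r
    rw [Real.logb]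
    field_simp
  have hsupp : ∑ p : 𝓧 × 𝓨, (if 0 < Q p then Q p else 0) = 1 := by
    rw [← hQsum]
    apply Finset.sum_congr rfl
    intro p _
    split_ifs with h
    · rfl
    · exact (le_antisymm (not_lt.mp h) (hQ0 p)).symm
  -- Term 1
  have t1 : relEnt (pY Q) (pY P) * Real.log 2
      = ∑ p : 𝓧 × 𝓨, (if 0 < Q p then Q p * Real.log (pY Q p.2 / pY P p.2) else 0) := by
    rw [relEnt_mul_log2]
    exact aux_marg_y Q hQ0 _
  -- Term 2
  have t2 : relEnt Q P * Real.log 2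
      = ∑ p : 𝓧 × 𝓨, (if 0 < Q p then Q p * Real.log (Q p / P p) else 0) := relEnt_mul_log2 Q P
  -- Term 3
  have t3 : (∑ y, if 0 < pY Q y then
        pY Q y * relEnt (fun x => pCond Q x y) (pX P) else 0) * Real.log 2
      = ∑ p : 𝓧 × 𝓨, (if 0 < Q p then Q p * Real.log (pCond Q p.1 p.2 / pX P p.1) else 0) := by
    rw [← aux_cond_joint Q hQ0 (fun x y => Real.log (pCond Q x y / pX P x)), Finset.sum_mul]
    apply Finset.sum_congr rfl
    intro y _
    split_ifs with hy
    · rw [mul_assoc, relEnt_mul_log2]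
    · exact zero_mul _
  -- Second sum on RHS via marginalization
  have t4 : (∑ y, if 0 < pY Q y then pY Q y * Real.log (pY Q y / Mfun P α β y) else 0)
      = ∑ p : 𝓧 × 𝓨, (if 0 < Q p then Q p * Real.log (pY Q p.2 / Mfun P α β p.2) else 0) :=
    aux_marg_y Q hQ0 _
  -- constant term
  have t5 : α / β * Real.log (Zfun P α β)
      = ∑ p : 𝓧 × 𝓨, (if 0 < Q p then Q p * (α / β * Real.log (Zfun P α β)) else 0) := by
    rw [aux_sum_if_mul_const, hsupp, one_mul]
  have expand : (α * (1 - β) / β * relEnt (pY Q) (pY P) + α * relEnt Q P +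
        (1 - α) * (∑ y, if 0 < pY Q y then
          pY Q y * relEnt (fun x => pCond Q x y) (pX P) else 0)) * Real.log 2
      = α * (1 - β) / β * (relEnt (pY Q) (pY P) * Real.log 2)
        + α * (relEnt Q P * Real.log 2)
        + (1 - α) * ((∑ y, if 0 < pY Q y then
            pY Q y * relEnt (fun x => pCond Q x y) (pX P) else 0) * Real.log 2) := by ring
  rw [expand, t1, t2, t3, t4, t5,
    Finset.mul_sum, Finset.mul_sum, Finset.mul_sum, Finset.mul_sum,
    ← Finset.sum_add_distrib, ← Finset.sum_add_distrib,
    ← Finset.sum_add_distrib, ← Finset.sum_sub_distrib]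
  apply Finset.sum_congr rfl
  intro p _
  split_ifs with h
  · have hpt := aux_pointwise P hP α β hα hβ hZ Q hQ0 hQP p.1 p.2 h
    calc α * (1 - β) / β * (Q p * Real.log (pY Q p.2 / pY P p.2))
        + α * (Q p * Real.log (Q p / P p))
        + (1 - α) * (Q p * Real.log (pCond Q p.1 p.2 / pX P p.1))
        = Q p * (α * (1 - β) / β * Real.log (pY Q p.2 / pY P p.2)
            + α * Real.log (Q (p.1, p.2) / P (p.1, p.2))
            + (1 - α) * Real.log (pCond Q p.1 p.2 / pX P p.1)) := by ring_nf
      _ = Q p * (Real.log (pCond Q p.1 p.2 / (gfun P α p.1 p.2 / Afun P α p.2))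
            + α / β * Real.log (pY Q p.2 / Mfun P α β p.2)
            - α / β * Real.log (Zfun P α β)) := by rw [hpt]
      _ = Q p * Real.log (pCond Q p.1 p.2 / (gfun P α p.1 p.2 / Afun P α p.2))
            + α / β * (Q p * Real.log (pY Q p.2 / Mfun P α β p.2))
            - Q p * (α / β * Real.log (Zfun P α β)) := by ring
  · simp

/-! ### The value of `Z` at `α = 1` and the target identity -/

lemma Afun_one (P : 𝓧 × 𝓨 → ℝ) (hP : ∀ p, 0 ≤ P p) {y : 𝓨} (hy : 0 < pY P y) :
    Afun P 1 y = 1 := by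
  have step : ∀ x : 𝓧, gfun P 1 x y = pCond P x y := by
    intro x
    unfold gfun
    split_ifs with hx
    · rw [show (1:ℝ) - 1 = 0 from by norm_num, Real.rpow_zero, Real.rpow_one, one_mul]
    · have hx0 : pX P x = 0 := le_antisymm (not_lt.mp hx) (pX_nonneg P hP x)
      have hP0 : P (x, y) = 0 := by
        have hle : P (x, y) ≤ pX P x :=
          Finset.single_le_sum (f := fun y' => P (x, y')) (fun i _ => hP _) (Finset.mem_univ y)
        exact le_antisymm (hx0 ▸ hle) (hP _)
      unfold pCond
      rw [hP0, zero_div]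
  unfold Afun
  rw [Finset.sum_congr rfl fun x _ => step x]
  unfold pCond
  rw [← Finset.sum_div]
  exact div_self hy.ne'

lemma Zfun_one (P : 𝓧 × 𝓨 → ℝ) (hP : ∀ p, 0 ≤ P p) (hPsum : ∑ p, P p = 1) (β : ℝ) :
    Zfun P 1 β = 1 := by
  unfold Zfun
  have step : ∀ y : 𝓨, (if 0 < pY P y then pY P y * Afun P 1 y ^ (β / 1) else 0) = pY P y := by
    intro y
    split_ifs with hy
    · rw [Afun_one P hP hy, Real.one_rpow, mul_one]
    · exact (le_antisymm (not_lt.mp hy) (pY_nonneg P hP y)).symm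
  rw [Finset.sum_congr rfl fun y _ => step y, aux_sum_pY, hPsum]

lemma target_eq (P : 𝓧 × 𝓨 → ℝ) (hP : ∀ p, 0 ≤ P p) (hPsum : ∑ p, P p = 1)
    (α β : ℝ) (hα : 0 < α) (hβ : 0 < β) :
    (1 - α) * ItildeE P α β = -(α / β) * Real.logb 2 (Zfun P α β) := by
  unfold ItildeE
  by_cases h1 : α = 1
  · subst h1
    rw [if_pos rfl, Zfun_one P hP hPsum β]
    simp
  · rw [if_neg h1]
    have hIt : Itilde P α β = α / (β * (α - 1)) * Real.logb 2 (Zfun P α β) := by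
      simp only [Itilde, Zfun, Afun, gfun]
    rw [hIt]
    have hne : α - 1 ≠ 0 := sub_ne_zero.mpr h1
    field_simp
    ring

/-! ### Properties of the optimizer `Qstar` -/

section QstarProps

variable (P : 𝓧 × 𝓨 → ℝ) (hP : ∀ p, 0 ≤ P p) (α β : ℝ)

include hP in
lemma Qstar_nonneg (hZ : 0 < Zfun P α β) : ∀ p, 0 ≤ Qstar P α β p := fun p =>
  div_nonneg (mul_nonneg (Mfun_nonneg P hP α β hZ _) (gfun_nonneg P hP α _ _))
    (Afun_nonneg P hP α _)

include hP in
lemma pY_Qstar (hZ : 0 < Zfun P α β) (y : 𝓨) : pY (Qstar P α β) y = Mfun P α β y := by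
  show (∑ x, Mfun P α β y * gfun P α x y / Afun P α y) = Mfun P α β y
  by_cases hy : 0 < pY P y
  · have hA : 0 < Afun P α y := Afun_pos P hP α hy
    have step : ∀ x : 𝓧, Mfun P α β y * gfun P α x y / Afun P α y
        = (Mfun P α β y / Afun P α y) * gfun P α x y := fun x => by ring
    rw [Finset.sum_congr rfl fun x _ => step x, ← Finset.mul_sum]
    show Mfun P α β y / Afun P α y * Afun P α y = Mfun P α β y
    exact div_mul_cancel₀ _ hA.ne'
  · have hM : Mfun P α β y = 0 := if_neg hy
    simp [hM]

include hP in
lemma Qstar_sum (hPsum : ∑ p, P p = 1) (hZ : 0 < Zfun P α β) :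
    ∑ p, Qstar P α β p = 1 := by
  rw [← aux_sum_pY, Finset.sum_congr rfl fun y _ => pY_Qstar P hP α β hZ y]
  exact Mfun_sum P hP α β hZ

lemma Qstar_ac (hα : 0 < α) : ∀ p, P p = 0 → Qstar P α β p = 0 := by
  rintro ⟨x, y⟩ h
  have hc : pCond P x y = 0 := by unfold pCond; rw [h, zero_div]
  show Mfun P α β y * gfun P α x y / Afun P α y = 0
  have hg : gfun P α x y = 0 := by
    unfold gfun
    split_ifs with hx
    · rw [hc, Real.zero_rpow hα.ne', mul_zero]
    · rfl
  rw [hg, mul_zero, zero_div]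

end QstarProps

/-- variational expression
`(1−α)·Ĩ_{α,β}(X:Y) = min_{Q_XY ≪ P_XY} ((α(1−β)/β)·D(Q_Y‖P_Y) + α·D(Q_XY‖P_XY)
  + (1−α)·D(Q_{X|Y}‖P_X|Q_Y))`. -/
theorem ItildeE_variational
    [Nonempty 𝓧] [Nonempty 𝓨]
    (P : 𝓧 × 𝓨 → ℝ) (hP : ∀ p, 0 ≤ P p) (hPsum : ∑ p, P p = 1)
    (α β : ℝ) (hα : 0 < α) (hβ : 0 < β) :
    IsLeast
      { v : ℝ | ∃ Q : 𝓧 × 𝓨 → ℝ,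
          (∀ p, 0 ≤ Q p) ∧ (∑ p, Q p = 1) ∧ (∀ p, P p = 0 → Q p = 0) ∧
          v = α * (1 - β) / β * relEnt (pY Q) (pY P) + α * relEnt Q P +
              (1 - α) *
                (∑ y, if 0 < pY Q y then
                  pY Q y * relEnt (fun x => pCond Q x y) (pX P) else 0) }
      ((1 - α) * ItildeE P α β) := by
  have hZ : 0 < Zfun P α β := Zfun_pos P hP α β hPsum
  have hlog2 : (0:ℝ) < Real.log 2 := Real.log_pos (by norm_num)
  have ht2 : (1 - α) * ItildeE P α β * Real.log 2 = -(α / β) * Real.log (Zfun P α β) := by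
    rw [target_eq P hP hPsum α β hα hβ, Real.logb, mul_assoc,
      div_mul_cancel₀ _ hlog2.ne']
  constructor
  · -- membership: the optimizer Qstar
    refine ⟨Qstar P α β, Qstar_nonneg P hP α β hZ, Qstar_sum P hP α β hPsum hZ,
      Qstar_ac P α β hα, ?_⟩
    have hre := aux_rearrange P hP α β hα hβ hZ (Qstar P α β)
      (Qstar_nonneg P hP α β hZ) (Qstar_sum P hP α β hPsum hZ) (Qstar_ac P α β hα)
    have hS1 : (∑ p : 𝓧 × 𝓨, if 0 < Qstar P α β p then
        Qstar P α β p * Real.log (pCond (Qstar P α β) p.1 p.2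
          / (gfun P α p.1 p.2 / Afun P α p.2)) else 0) = 0 := by
      apply Finset.sum_eq_zero
      intro p _
      split_ifs with hp
      · have hM : 0 < Mfun P α β p.2 := by
          by_contra hM
          have hM0 : Mfun P α β p.2 = 0 :=
            le_antisymm (not_lt.mp hM) (Mfun_nonneg P hP α β hZ _)
          have : Qstar P α β p = 0 := by
            show Mfun P α β p.2 * gfun P α p.1 p.2 / Afun P α p.2 = 0
            rw [hM0, zero_mul, zero_div]
          exact hp.ne' this
        have hpYP : 0 < pY P p.2 := by
          by_contra hy
          exact absurd (if_neg hy : Mfun P α β p.2 = 0) hM.ne'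
        have hA : 0 < Afun P α p.2 := Afun_pos P hP α hpYP
        have hg : 0 < gfun P α p.1 p.2 := by
          rcases (gfun_nonneg P hP α p.1 p.2).lt_or_eq with h | h
          · exact h
          · exfalso
            have : Qstar P α β p = 0 := by
              show Mfun P α β p.2 * gfun P α p.1 p.2 / Afun P α p.2 = 0
              rw [← h, mul_zero, zero_div]
            exact hp.ne' this
        have hcond : pCond (Qstar P α β) p.1 p.2 = gfun P α p.1 p.2 / Afun P α p.2 := by
          unfold pCond
          rw [pY_Qstar P hP α β hZ p.2]
          show Mfun P α β p.2 * gfun P α p.1 p.2 / Afun P α p.2 / Mfun P α β p.2 = _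
          rw [mul_div_assoc]
          exact mul_div_cancel_left₀ _ hM.ne'
        rw [hcond, div_self (by positivity), Real.log_one, mul_zero]
      · rfl
    have hS2 : (∑ y, if 0 < pY (Qstar P α β) y then
        pY (Qstar P α β) y * Real.log (pY (Qstar P α β) y / Mfun P α β y) else 0) = 0 := by
      apply Finset.sum_eq_zero
      intro y _
      split_ifs with hy
      · rw [pY_Qstar P hP α β hZ y] at hy ⊢
        rw [div_self hy.ne', Real.log_one, mul_zero]
      · rfl
    rw [hS1, hS2] at hre
    apply mul_right_cancel₀ hlog2.ne'
    rw [hre, ht2]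
    ring
  · -- lower bound
    rintro v ⟨Q, hQ0, hQsum, hQP, rfl⟩
    have hre := aux_rearrange P hP α β hα hβ hZ Q hQ0 hQsum hQP
    have hS1nn : 0 ≤ ∑ p : 𝓧 × 𝓨, if 0 < Q p then
        Q p * Real.log (pCond Q p.1 p.2 / (gfun P α p.1 p.2 / Afun P α p.2)) else 0 := by
      rw [← aux_cond_joint Q hQ0 (fun x y => Real.log (pCond Q x y / (gfun P α x y / Afun P α y)))]
      apply Finset.sum_nonneg
      intro y _
      split_ifs with hy
      · apply mul_nonneg hy.le
        have hpYP : 0 < pY P y := by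
          obtain ⟨x0, hx0⟩ := aux_exists_pos Q hQ0 y hy
          have hP0 : 0 < P (x0, y) := by
            rcases (hP (x0, y)).lt_or_eq with h | h
            · exact h
            · exact absurd (hQP _ h.symm) hx0.ne'
          exact lt_of_lt_of_le hP0
            (Finset.single_le_sum (f := fun x' => P (x', y)) (fun i _ => hP _)
              (Finset.mem_univ x0))
        have hA : 0 < Afun P α y := Afun_pos P hP α hpYP
        apply aux_gibbs (fun x => pCond Q x y) (fun x => gfun P α x y / Afun P α y)
        · exact fun x => div_nonneg (hQ0 _) (pY_nonneg Q hQ0 y)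
        · exact fun x => div_nonneg (gfun_nonneg P hP α x y) (Afun_nonneg P hP α y)
        · show (∑ x, Q (x, y) / pY Q y) = 1
          rw [← Finset.sum_div]
          exact div_self hy.ne'
        · rw [Afun_sum_div P hP α hA]
        · intro x hx
          have hQxy : 0 < Q (x, y) := by
            have : Q (x, y) = pCond Q x y * pY Q y := (div_mul_cancel₀ _ hy.ne').symm
            rw [this]
            exact mul_pos hx hy
          have hPxy : 0 < P (x, y) := by
            rcases (hP (x, y)).lt_or_eq with h | h
            · exact h
            · exact absurd (hQP _ h.symm) hQxy.ne'
          exact div_pos (gfun_pos P hP α hPxy) hA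
      · exact le_refl 0
    have hS2nn : 0 ≤ ∑ y, if 0 < pY Q y then
        pY Q y * Real.log (pY Q y / Mfun P α β y) else 0 := by
      apply aux_gibbs (pY Q) (Mfun P α β)
      · exact pY_nonneg Q hQ0
      · exact Mfun_nonneg P hP α β hZ
      · rw [aux_sum_pY]; exact hQsum
      · exact le_of_eq (Mfun_sum P hP α β hZ)
      · intro y hy
        obtain ⟨x0, hx0⟩ := aux_exists_pos Q hQ0 y hy
        have hP0 : 0 < P (x0, y) := by
          rcases (hP (x0, y)).lt_or_eq with h | h
          · exact h
          · exact absurd (hQP _ h.symm) hx0.ne'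
        have hpYP : 0 < pY P y := lt_of_lt_of_le hP0
          (Finset.single_le_sum (f := fun x' => P (x', y)) (fun i _ => hP _)
            (Finset.mem_univ x0))
        exact Mfun_pos P hP α β hZ hpYP
    have hαβ : 0 ≤ α / β := le_of_lt (div_pos hα hβ)
    have hmul : (1 - α) * ItildeE P α β * Real.log 2
        ≤ (α * (1 - β) / β * relEnt (pY Q) (pY P) + α * relEnt Q P +
            (1 - α) * (∑ y, if 0 < pY Q y then
              pY Q y * relEnt (fun x => pCond Q x y) (pX P) else 0)) * Real.log 2 := by
      rw [hre, ht2]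
      have h2 : 0 ≤ α / β * (∑ y, if 0 < pY Q y then
          pY Q y * Real.log (pY Q y / Mfun P α β y) else 0) := mul_nonneg hαβ hS2nn
      linarith
    exact le_of_mul_le_mul_right hmul hlog2
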